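/- arXiv:math/0508094 — 4 statements merged into one kernel-verified Lean document; each statement's English description precedes it below -/
import Mathlib

section
/- For any Somos 4 sequence A over a field K with coefficients α, β, the quantity T(n) = A(n-1)·A(n+2)/(A(n)·A(n+1)) + α·(A(n)^2/(A(n-1)·A(n+1)) + A(n+1)^2/(A(n)·A(n+2))) + β·A(n)·A(n+1)/(A(n-1)·A(n+2)) is independent of n, i.e. T(m) = T(n) for all m, n ∈ ℤ. -/
/-!
Writing `T(n) = Q(A(n-1), A n, A(n+1), A(n+2))` for a rational function `Q` of four consecutive
terms, the recurrence `e a = α d b + β c²` is exactly what makes `Q(b, c, d, e) = Q(a, b, c, d)`: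
after clearing denominators the difference is `(b² e - a d²)(e a - α d b - β c²)`.
So `T` has period one, hence is constant on `ℤ`.
-/

namespace Somos4

variable {K : Type*} [Field K]

def windowInvariant (α β a b c d : K) : K :=
  a * d / (b * c) + α * (b ^ 2 / (a * c) + c ^ 2 / (b * d)) + β * (b * c) / (a * d)

theorem windowInvariant_shift (α β : K) {a b c d e : K}
    (ha : a ≠ 0) (hb : b ≠ 0) (hc : c ≠ 0) (hd : d ≠ 0) (he : e ≠ 0)
    (h : e * a = α * (d * b) + β * c ^ 2) :
    windowInvariant α β b c d e = windowInvariant α β a b c d := by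
  unfold windowInvariant
  field_simp
  linear_combination (b ^ 2 * e - a * d ^ 2) * h

theorem windowInvariant_periodic (α β : K) {A : ℤ → K} (hA : ∀ n, A n ≠ 0)
    (hrec : ∀ n : ℤ, A (n + 4) * A n = α * (A (n + 3) * A (n + 1)) + β * (A (n + 2)) ^ 2) :
    Function.Periodic
      (fun n ↦ windowInvariant α β (A (n - 1)) (A n) (A (n + 1)) (A (n + 2))) 1 := by
  intro n
  have h := hrec (n - 1)
  rw [show n - 1 + 4 = n + 3 by ring, show n - 1 + 3 = n + 2 by ring,
    show n - 1 + 2 = n + 1 by ring, sub_add_cancel] at h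
  dsimp only
  rw [add_sub_cancel_right, show n + 1 + 1 = n + 2 by ring, show n + 1 + 2 = n + 3 by ring]
  exact windowInvariant_shift α β (hA _) (hA _) (hA _) (hA _) (hA _) h

end Somos4

open Somos4 in
/-- The translation invariant of a Somos 4 sequence is independent of `n`. -/
theorem somos4_translation_invariant {K : Type*} [Field K] (α β : K) (A : ℤ → K)
    (hA : ∀ n : ℤ, A n ≠ 0)
    (hrec : ∀ n : ℤ, A (n + 4) * A n = α * (A (n + 3) * A (n + 1)) + β * (A (n + 2)) ^ 2) :
    ∀ m n : ℤ,
      (A (m - 1) * A (m + 2) / (A m * A (m + 1))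
        + α * ((A m) ^ 2 / (A (m - 1) * A (m + 1)) + (A (m + 1)) ^ 2 / (A m * A (m + 2)))
        + β * (A m * A (m + 1)) / (A (m - 1) * A (m + 2)))
      = (A (n - 1) * A (n + 2) / (A n * A (n + 1))
        + α * ((A n) ^ 2 / (A (n - 1) * A (n + 1)) + (A (n + 1)) ^ 2 / (A n * A (n + 2)))
        + β * (A n * A (n + 1)) / (A (n - 1) * A (n + 2))) := by
  intro m n
  have hT := windowInvariant_periodic α β hA hrec
  have hconst : ∀ k : ℤ, windowInvariant α β (A (k - 1)) (A k) (A (k + 1)) (A (k + 2))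
      = windowInvariant α β (A (0 - 1)) (A 0) (A (0 + 1)) (A (0 + 2)) := fun k ↦ by
    simpa using hT.int_mul_eq k
  exact (hconst m).trans (hconst n).symm
end

section
/- (Laurent property for Somos 4 sequences.) Let K be the field of fractions of the polynomial ring ℤ[a, b, x₁, x₂, x₃, x₄] in six indeterminates, and let A : ℤ → K be a Somos 4 sequence over K with coefficients α = a, β = b and with A(1) = x₁, A(2) = x₂, A(3) = x₃, A(4) = x₄. Then for every n ∈ ℤ, A(n) lies in the subring of K generated by a, b, x₁, x₂, x₃, x₄ and the inverses x₁⁻¹, x₂⁻¹, x₃⁻¹, x₄⁻¹; that is, every term is a Laurent polynomial in the initial data with coefficients in ℤ[a, b]. -/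
/-
Work in the Laurent ring `L = ℤ[a, b, x₁^{±1}, …, x₄^{±1}]`, a localisation of a UFD, embedded in
`K`. Starting from the units `x₁, …, x₄`, one shows inductively that every term lies in `L` and
that any four consecutive terms are pairwise coprime and coprime to `a` and `b`: by the
recurrence, a common factor of a new term and an older one would divide `a`, `b` or another
older term. For the step, the recurrence read modulo `A (n + 4)` gives
`A (n + 1) A (n + 2)² A (n + 3) (a A (n + 7) A (n + 5) + b A (n + 6)²) ≡ 0`,
so by coprimality `A (n + 4)` divides the numerator of `A (n + 8)`. The recurrence is symmetric
under the reflection `n ↦ 4 - n`, which gives the terms of non-positive index.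
-/

/-- The images of the six indeterminates of `ℤ[a, b, x₁, x₂, x₃, x₄]` in its
field of fractions. -/
noncomputable def gen6 (i : Fin 6) : FractionRing (MvPolynomial (Fin 6) ℤ) :=
  algebraMap (MvPolynomial (Fin 6) ℤ) (FractionRing (MvPolynomial (Fin 6) ℤ)) (MvPolynomial.X i)

theorem IsRelPrime.of_mul_eq_add_mul {D : Type*} [CommRing D] {x y z q c : D}
    (h : IsRelPrime x y) (hq : q * c = y + z * x) : IsRelPrime x q :=
  IsRelPrime.of_mul_right_left (z := c) <| hq ▸ fun _ hx hy ↦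
    h hx (by simpa using dvd_sub hy (dvd_mul_of_dvd_right hx z))

theorem RingHom.mem_range_of_mul_eq {D K : Type*} [CommRing D] [CommRing K] [IsDomain K]
    {f : D →+* K} {x : K} {t r : D} (h : x * f t = f r) (ht : f t ≠ 0) (hdvd : t ∣ r) :
    x ∈ f.range := by
  obtain ⟨q, rfl⟩ := hdvd
  exact ⟨q, mul_right_cancel₀ ht (by rw [h, map_mul, mul_comm])⟩

namespace Somos4

section Coprime

variable {D : Type*} [CommRing D] (α β : D)

def CoprimeWindow (c d e f : D) : Prop :=
  List.Pairwise IsRelPrime [α, β, c, d, e, f]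

variable {α β}

theorem CoprimeWindow.of_isUnit (hαβ : IsRelPrime α β) {c d e f : D} (hc : IsUnit c)
    (hd : IsUnit d) (he : IsUnit e) (hf : IsUnit f) : CoprimeWindow α β c d e f := by
  simp [CoprimeWindow, hαβ, hc.isRelPrime_left, hc.isRelPrime_right, hd.isRelPrime_left,
    hd.isRelPrime_right, he.isRelPrime_left, he.isRelPrime_right, hf.isRelPrime_right]

theorem CoprimeWindow.next [DecompositionMonoid D] {c d e f q : D}
    (h : CoprimeWindow α β c d e f) (hq : q * c = α * (f * d) + β * e ^ 2) :
    CoprimeWindow α β d e f q := by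
  simp only [CoprimeWindow, List.pairwise_cons, List.mem_cons, List.not_mem_nil, or_false,
    forall_eq_or_imp, forall_eq, List.Pairwise.nil, and_true, IsEmpty.forall_iff,
    implies_true] at h ⊢
  obtain ⟨⟨hαβ, -, hαd, hαe, hαf⟩, ⟨-, hβd, hβe, hβf⟩, -, ⟨hde, hdf⟩, hef⟩ := h
  refine ⟨⟨hαβ, hαd, hαe, hαf, ?_⟩, ⟨hβd, hβe, hβf, ?_⟩, ⟨hde, hdf, ?_⟩, ⟨hef, ?_⟩, ?_⟩
  · exact (hαβ.mul_right (hαe.pow_right (n := 2))).of_mul_eq_add_mul (z := f * d)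
      (by rw [hq]; ring)
  · exact (hαβ.symm.mul_right (hβf.mul_right hβd)).of_mul_eq_add_mul (z := e ^ 2)
      (by rw [hq]; ring)
  · exact (hβd.symm.mul_right (hde.pow_right (n := 2))).of_mul_eq_add_mul (z := α * f)
      (by rw [hq]; ring)
  · exact (hαe.symm.mul_right (hef.mul_right hde.symm)).of_mul_eq_add_mul (z := β * e)
      (by rw [hq]; ring)
  · exact (hβf.symm.mul_right (hef.symm.pow_right (n := 2))).of_mul_eq_add_mul (z := α * d)
      (by rw [hq]; ring)

end Coprime

section Divisibility

variable {D : Type*} [CommRing D] {α β t₀ t₁ t₂ t₃ t₄ t₅ t₆ t₇ : D}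

theorem dvd_mul_numerator (r₀ : t₄ * t₀ = α * (t₃ * t₁) + β * t₂ ^ 2)
    (r₁ : t₅ * t₁ = α * (t₄ * t₂) + β * t₃ ^ 2) (r₂ : t₆ * t₂ = α * (t₅ * t₃) + β * t₄ ^ 2)
    (r₃ : t₇ * t₃ = α * (t₆ * t₄) + β * t₅ ^ 2) :
    t₄ ∣ t₁ * t₂ ^ 2 * t₃ * (α * (t₇ * t₅) + β * t₆ ^ 2) := by
  let π := Ideal.Quotient.mk (Ideal.span {t₄})
  have h₄ : π t₄ = 0 := (Ideal.Quotient.eq_zero_iff_dvd _ _).mpr dvd_rfl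
  rw [← Ideal.Quotient.eq_zero_iff_dvd]
  apply_fun π at r₀ r₁ r₂ r₃
  simp only [map_add, map_mul, map_pow, h₄, zero_mul, mul_zero, zero_add, add_zero,
    zero_pow two_ne_zero] at r₀ r₁ r₂ r₃ ⊢
  linear_combination α * π t₁ * π t₂ ^ 2 * π t₅ * r₃
    + β * π t₁ * π t₃ * (π t₆ * π t₂ + α * π t₅ * π t₃) * r₂
    + α * β * π t₅ ^ 2 * π t₂ ^ 2 * r₁ - α * β * π t₅ ^ 2 * π t₃ ^ 2 * r₀

theorem dvd_numerator [DecompositionMonoid D] (r₀ : t₄ * t₀ = α * (t₃ * t₁) + β * t₂ ^ 2)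
    (r₁ : t₅ * t₁ = α * (t₄ * t₂) + β * t₃ ^ 2) (r₂ : t₆ * t₂ = α * (t₅ * t₃) + β * t₄ ^ 2)
    (r₃ : t₇ * t₃ = α * (t₆ * t₄) + β * t₅ ^ 2) (hw : CoprimeWindow α β t₁ t₂ t₃ t₄) :
    t₄ ∣ α * (t₇ * t₅) + β * t₆ ^ 2 := by
  simp only [CoprimeWindow, List.pairwise_cons, List.mem_cons, List.not_mem_nil, or_false,
    forall_eq_or_imp, forall_eq] at hw
  obtain ⟨-, -, ⟨-, -, h₁⟩, ⟨-, h₂⟩, h₃, -⟩ := hw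
  exact ((h₁.symm.mul_right h₂.symm.pow_right).mul_right h₃.symm).dvd_of_dvd_mul_left
    (dvd_mul_numerator r₀ r₁ r₂ r₃)

end Divisibility

section Lifting

variable {D K : Type*} [CommRing D] [CommRing K] {f : D →+* K} {α β : D}
  {a : ℕ → K} {b : ℕ → D}

theorem rec_of_map (hf : Function.Injective f)
    (hrec : ∀ n, a (n + 4) * a n = f α * (a (n + 3) * a (n + 1)) + f β * a (n + 2) ^ 2) {n : ℕ}
    (hb : ∀ m ≤ n + 4, f (b m) = a m) :
    b (n + 4) * b n = α * (b (n + 3) * b (n + 1)) + β * b (n + 2) ^ 2 :=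
  hf <| by simp (disch := omega) only [map_add, map_mul, map_pow, hb]; exact hrec n

theorem next_mem_range [IsDomain K] (ha : ∀ n, a n ≠ 0)
    (hrec : ∀ n, a (n + 4) * a n = f α * (a (n + 3) * a (n + 1)) + f β * a (n + 2) ^ 2) {n : ℕ}
    (hb : ∀ m ≤ n + 3, f (b m) = a m)
    (hdvd : b n ∣ α * (b (n + 3) * b (n + 1)) + β * b (n + 2) ^ 2) : a (n + 4) ∈ f.range :=
  RingHom.mem_range_of_mul_eq
    (by simp (disch := omega) only [map_add, map_mul, map_pow, hb]; exact hrec n)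
    (by rw [hb n (by omega)]; exact ha n) hdvd

theorem mem_range [IsDomain K] [DecompositionMonoid D] (hf : Function.Injective f)
    (hαβ : IsRelPrime α β) (ha : ∀ n, a n ≠ 0)
    (hrec : ∀ n, a (n + 4) * a n = f α * (a (n + 3) * a (n + 1)) + f β * a (n + 2) ^ 2)
    (hinit : ∀ n < 4, ∃ u : Dˣ, f u = a n) (n : ℕ) : a n ∈ f.range := by
  set b : ℕ → D := fun n ↦ Function.invFun f (a n)
  have init (n : ℕ) (hn : n < 4) : IsUnit (b n) ∧ f (b n) = a n := by
    obtain ⟨u, hu⟩ := hinit n hn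
    have hb : f (b n) = a n := Function.invFun_eq ⟨u, hu⟩
    exact ⟨hf (hb.trans hu.symm) ▸ u.isUnit, hb⟩
  have key (n : ℕ) : (∀ m ≤ n + 3, f (b m) = a m) ∧
      CoprimeWindow α β (b n) (b (n + 1)) (b (n + 2)) (b (n + 3)) := by
    induction n using Nat.strong_induction_on with | _ n ih =>
    cases n with
    | zero =>
      exact ⟨fun m hm ↦ (init m (by omega)).2, .of_isUnit hαβ (init 0 (by omega)).1
        (init 1 (by omega)).1 (init 2 (by omega)).1 (init 3 (by omega)).1⟩
    | succ n =>
      obtain ⟨hb, hw⟩ := ih n (by omega)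
      have hdvd : b n ∣ α * (b (n + 3) * b (n + 1)) + β * b (n + 2) ^ 2 := by
        rcases lt_or_ge n 4 with hn | hn
        · exact (init n hn).1.dvd
        obtain ⟨m, rfl⟩ := Nat.exists_eq_add_of_le' hn
        exact dvd_numerator (rec_of_map hf hrec fun k hk ↦ hb k (by omega))
          (rec_of_map hf hrec fun k hk ↦ hb k (by omega))
          (rec_of_map hf hrec fun k hk ↦ hb k (by omega))
          (rec_of_map hf hrec fun k hk ↦ hb k (by omega)) (ih (m + 1) (by omega)).2
      have hb₄ : f (b (n + 4)) = a (n + 4) :=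
        Function.invFun_eq (next_mem_range ha hrec hb hdvd)
      have hb' (m : ℕ) (hm : m ≤ n + 4) : f (b m) = a m := by
        rcases hm.lt_or_eq with hm | rfl
        exacts [hb m (by omega), hb₄]
      exact ⟨hb', hw.next (rec_of_map hf hrec hb')⟩
  exact ⟨b n, (key n).1 n (by omega)⟩

end Lifting

section Reindexing

variable {K : Type*} [CommRing K] {α β : K} {A : ℤ → K}

theorem rec_comp_add_natCast
    (hrec : ∀ n, A (n + 4) * A n = α * (A (n + 3) * A (n + 1)) + β * A (n + 2) ^ 2) (c : ℤ)
    (n : ℕ) : A (↑(n + 4) + c) * A (↑n + c) =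
      α * (A (↑(n + 3) + c) * A (↑(n + 1) + c)) + β * A (↑(n + 2) + c) ^ 2 := by
  have h := hrec (n + c)
  push_cast
  ring_nf at h ⊢
  exact h

theorem rec_comp_sub_natCast
    (hrec : ∀ n, A (n + 4) * A n = α * (A (n + 3) * A (n + 1)) + β * A (n + 2) ^ 2) (c : ℤ)
    (n : ℕ) : A (c - ↑(n + 4)) * A (c - ↑n) =
      α * (A (c - ↑(n + 3)) * A (c - ↑(n + 1))) + β * A (c - ↑(n + 2)) ^ 2 := by
  have h := hrec (c - n - 4)
  push_cast
  ring_nf at h ⊢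
  exact h

end Reindexing

section LaurentRing

open MvPolynomial

-- `x₁x₂x₃x₄`; `LaurentRing` is `ℤ[a, b, x₁^{±1}, …, x₄^{±1}]`.
noncomputable def initialProduct : MvPolynomial (Fin 6) ℤ := ∏ i ∈ Finset.Icc 2 5, X i

abbrev LaurentRing : Type := Localization.Away initialProduct

theorem initialProduct_ne_zero : initialProduct ≠ 0 :=
  Finset.prod_ne_zero_iff.mpr fun i _ ↦ X_ne_zero i

theorem algebraMap_injective :
    Function.Injective (algebraMap (MvPolynomial (Fin 6) ℤ) LaurentRing) :=
  IsLocalization.injective _ (powers_le_nonZeroDivisors_of_noZeroDivisors initialProduct_ne_zero)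

noncomputable def toFractionRing : LaurentRing →+* FractionRing (MvPolynomial (Fin 6) ℤ) :=
  IsLocalization.Away.lift initialProduct <| isUnit_iff_ne_zero.mpr <|
    (map_ne_zero_iff _ (IsFractionRing.injective _ _)).mpr initialProduct_ne_zero

theorem toFractionRing_algebraMap (r : MvPolynomial (Fin 6) ℤ) :
    toFractionRing (algebraMap _ _ r) = algebraMap _ _ r :=
  IsLocalization.Away.lift_eq _ _ _

theorem toFractionRing_injective : Function.Injective toFractionRing :=
  (IsLocalization.lift_injective_iff _).mpr fun _ _ ↦
    algebraMap_injective.eq_iff.trans (IsFractionRing.injective _ _).eq_iff.symm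

theorem exists_unit_map_X {i : Fin 6} (hi : 2 ≤ i) :
    ∃ u : LaurentRingˣ, toFractionRing u = gen6 i := by
  have hu : IsUnit (algebraMap (MvPolynomial (Fin 6) ℤ) LaurentRing (X i)) :=
    IsLocalization.Away.isUnit_of_dvd initialProduct
      (Finset.dvd_prod_of_mem _ (Finset.mem_Icc.mpr ⟨hi, Fin.le_last i⟩))
  exact ⟨hu.unit, toFractionRing_algebraMap _⟩

theorem isRelPrime_X_zero_X_one :
    IsRelPrime (algebraMap (MvPolynomial (Fin 6) ℤ) LaurentRing (X 0))
      (algebraMap (MvPolynomial (Fin 6) ℤ) LaurentRing (X 1)) := by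
  let φ := IsLocalization.toLocalizationMap (Submonoid.powers initialProduct) LaurentRing
  -- `ev` kills the multiples of `a` but neither `b` nor the powers of `initialProduct`.
  let ev := MvPolynomial.eval fun i : Fin 6 ↦ if i = 0 then (0 : ℤ) else 1
  have not_dvd (s) (hs : s ∈ Submonoid.powers initialProduct) (r) (hr : ev r = 1) :
      ¬ X 0 ∣ s * r := by
    obtain ⟨k, rfl⟩ := hs
    rintro ⟨c, hc⟩
    simpa [ev, initialProduct, hr] using congrArg ev hc
  have hprime : Prime (φ (X 0)) := φ.map_prime X_prime
    ((map_ne_zero_iff _ algebraMap_injective).mpr (X_ne_zero _))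
    fun hu ↦ by
      obtain ⟨s, hs, hdvd⟩ := φ.map_isUnit_iff.mp hu
      exact not_dvd s hs 1 (by simp) (by simpa using hdvd)
  refine hprime.irreducible.isRelPrime_iff_not_dvd.mpr fun h ↦ ?_
  obtain ⟨s, hs, hdvd⟩ := φ.map_dvd_map.mp h
  exact not_dvd s hs _ (by simp [ev]) hdvd

theorem toFractionRing_mem_closure (ℓ : LaurentRing) :
    toFractionRing ℓ ∈ Subring.closure
      {gen6 0, gen6 1, gen6 2, gen6 3, gen6 4, gen6 5,
        (gen6 2)⁻¹, (gen6 3)⁻¹, (gen6 4)⁻¹, (gen6 5)⁻¹} := by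
  set S := Subring.closure {gen6 0, gen6 1, gen6 2, gen6 3, gen6 4, gen6 5,
    (gen6 2)⁻¹, (gen6 3)⁻¹, (gen6 4)⁻¹, (gen6 5)⁻¹}
  have hX (i : Fin 6) : gen6 i ∈ S := Subring.subset_closure (by fin_cases i <;> simp)
  have hpoly (r : MvPolynomial (Fin 6) ℤ) : algebraMap _ (FractionRing _) r ∈ S := by
    induction r using MvPolynomial.induction_on with
    | C z => simp
    | add p q hp hq => rw [map_add]; exact add_mem hp hq
    | mul_X p i hp => rw [map_mul]; exact mul_mem hp (hX i)
  have hinv : (algebraMap _ (FractionRing _) initialProduct)⁻¹ ∈ S := by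
    rw [initialProduct, map_prod, ← Finset.prod_inv_distrib]
    refine prod_mem fun i hi ↦ Subring.subset_closure ?_
    fin_cases i <;> simp_all [gen6]
  have hne : algebraMap _ (FractionRing (MvPolynomial (Fin 6) ℤ)) initialProduct ≠ 0 :=
    (map_ne_zero_iff _ (IsFractionRing.injective _ _)).mpr initialProduct_ne_zero
  obtain ⟨⟨r, _, k, rfl⟩, hrs⟩ := IsLocalization.surj (Submonoid.powers initialProduct) ℓ
  replace hrs := congrArg toFractionRing hrs
  simp only [map_mul, map_pow, toFractionRing_algebraMap] at hrs
  rw [(eq_mul_inv_iff_mul_eq₀ (pow_ne_zero k hne)).mpr hrs, ← inv_pow]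
  exact mul_mem (hpoly r) (pow_mem hinv k)

end LaurentRing

end Somos4

open Somos4 in
/-- The Laurent property for Somos 4 sequences: every term of the generic Somos 4
sequence is a Laurent polynomial in the initial data with coefficients in `ℤ[α, β]`. -/
theorem somos4_laurent_property (A : ℤ → FractionRing (MvPolynomial (Fin 6) ℤ))
    (hA : ∀ n : ℤ, A n ≠ 0)
    (hrec : ∀ n : ℤ,
      A (n + 4) * A n = gen6 0 * (A (n + 3) * A (n + 1)) + gen6 1 * (A (n + 2)) ^ 2)
    (h1 : A 1 = gen6 2) (h2 : A 2 = gen6 3) (h3 : A 3 = gen6 4) (h4 : A 4 = gen6 5) :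
    ∀ n : ℤ, A n ∈ Subring.closure
      {gen6 0, gen6 1, gen6 2, gen6 3, gen6 4, gen6 5,
        (gen6 2)⁻¹, (gen6 3)⁻¹, (gen6 4)⁻¹, (gen6 5)⁻¹} := by
  simp only [gen6, ← toFractionRing_algebraMap] at hrec
  intro n
  suffices A n ∈ toFractionRing.range by
    obtain ⟨ℓ, hℓ⟩ := this
    exact hℓ ▸ toFractionRing_mem_closure ℓ
  rcases le_or_gt 1 n with hn | hn
  · obtain ⟨k, rfl⟩ : ∃ k : ℕ, n = k + 1 := ⟨(n - 1).toNat, by omega⟩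
    refine mem_range (a := fun k : ℕ ↦ A (k + 1)) toFractionRing_injective
      isRelPrime_X_zero_X_one (fun _ ↦ hA _) (rec_comp_add_natCast hrec 1) (fun m hm ↦ ?_) k
    interval_cases m <;> norm_num [h1, h2, h3, h4] <;> exact exists_unit_map_X (by decide)
  · obtain ⟨k, rfl⟩ : ∃ k : ℕ, n = 4 - k := ⟨(4 - n).toNat, by omega⟩
    refine mem_range (a := fun k : ℕ ↦ A (4 - k)) toFractionRing_injective
      isRelPrime_X_zero_X_one (fun _ ↦ hA _) (rec_comp_sub_natCast hrec 4) (fun m hm ↦ ?_) k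
    interval_cases m <;> norm_num [h1, h2, h3, h4] <;> exact exists_unit_map_X (by decide)
end

section
/- (Polynomial representation for elliptic divisibility sequences.) Let K be the field of fractions of the polynomial ring ℤ[a, b, i] in three indeterminates, and let W : ℤ → K satisfy W(n+4)·W(n) = a^2·W(n+3)·W(n+1) + b·W(n+2)^2 for all n ∈ ℤ, together with W(−n) = −W(n) for all n, W(0) = 0, W(1) = 1, W(2) = −a, W(3) = −b, and W(4) = i·a. Then for every n ∈ ℤ, W(2n−1) lies in the subring of K generated by a^2, b and i, and W(2n) lies in a·R, where R is the subring of K generated by a^2, b and i. -/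
/-- The images of the three indeterminates of `ℤ[a, b, i]` in its field of fractions. -/
noncomputable def gen3 (k : Fin 3) : FractionRing (MvPolynomial (Fin 3) ℤ) :=
  algebraMap (MvPolynomial (Fin 3) ℤ) (FractionRing (MvPolynomial (Fin 3) ℤ)) (MvPolynomial.X k)

namespace EDSaux

abbrev Rz : Type := MvPolynomial (Fin 3) ℤ
abbrev K3 : Type := FractionRing Rz

noncomputable def algK : Rz →+* K3 := algebraMap _ _

noncomputable def evp : Rz →+* ℤ := (MvPolynomial.eval ![2, -3, -2]).comp (RingHom.id _)

lemma algK_inj : Function.Injective algK := IsFractionRing.injective Rz K3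

lemma gen3_eq (k : Fin 3) : gen3 k = algK (MvPolynomial.X k) := rfl

lemma gen0_ne : gen3 0 ≠ 0 := by
  rw [gen3_eq]
  intro h
  exact MvPolynomial.X_ne_zero 0 (algK_inj (by simpa using h))

lemma gen1_ne : gen3 1 ≠ 0 := by
  rw [gen3_eq]
  intro h
  exact MvPolynomial.X_ne_zero 1 (algK_inj (by simpa using h))

/-- concrete integer EDS : v n = (-1)^(n-1) n -/
def vs (n : ℤ) : ℤ := if Even n then -n else n

lemma vs_ne {n : ℤ} (h : n ≠ 0) : vs n ≠ 0 := by
  unfold vs; split <;> omega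

lemma vs_somos (n : ℤ) : vs (n+4) * vs n = 4 * (vs (n+3) * vs (n+1)) + (-3) * (vs (n+2))^2 := by
  rcases Int.even_or_odd n with h | h
  · rw [Int.even_iff] at h
    have h0 : Even n := by simp only [Int.even_iff]; omega
    have h1 : ¬ Even (n+1) := by simp only [Int.even_iff]; omega
    have h2 : Even (n+2) := by simp only [Int.even_iff]; omega
    have h3 : ¬ Even (n+3) := by simp only [Int.even_iff]; omega
    have h4 : Even (n+4) := by simp only [Int.even_iff]; omega
    simp only [vs, if_pos h0, if_neg h1, if_pos h2, if_neg h3, if_pos h4]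
    ring
  · rw [Int.odd_iff] at h
    have h0 : ¬ Even n := by simp only [Int.even_iff]; omega
    have h1 : Even (n+1) := by simp only [Int.even_iff]; omega
    have h2 : ¬ Even (n+2) := by simp only [Int.even_iff]; omega
    have h3 : Even (n+3) := by simp only [Int.even_iff]; omega
    have h4 : ¬ Even (n+4) := by simp only [Int.even_iff]; omega
    simp only [vs, if_neg h0, if_pos h1, if_neg h2, if_pos h3, if_neg h4]
    ring

lemma evp_X0 : evp (MvPolynomial.X 0) = 2 := by simp [evp]
lemma evp_X1 : evp (MvPolynomial.X 1) = -3 := by simp [evp]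
lemma evp_X2 : evp (MvPolynomial.X 2) = -2 := by simp [evp]

end EDSaux

namespace EDSaux

open MvPolynomial

section Main

variable {W : ℤ → K3}
    (hrec : ∀ n : ℤ,
      W (n + 4) * W n = (gen3 0) ^ 2 * (W (n + 3) * W (n + 1)) + gen3 1 * (W (n + 2)) ^ 2)
    (hWodd : ∀ n : ℤ, W (-n) = -W n)
    (hW0 : W 0 = 0) (hW1 : W 1 = 1) (hW2 : W 2 = -gen3 0) (hW3 : W 3 = -gen3 1)
    (hW4 : W 4 = gen3 2 * gen3 0)

/-- localization-style membership witnessing `W n` specializes to `vs n`. -/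
def Good (W : ℤ → K3) (n : ℤ) : Prop :=
  ∃ p q : Rz, evp q ≠ 0 ∧ W n * algK q = algK p ∧ evp p = vs n * evp q

lemma goodCongr {a b : ℤ} (h : a = b) (g : Good W a) : Good W b := h ▸ g

include hW1 in
lemma good1 : Good W 1 :=
  ⟨1, 1, by simp, by simp [hW1], by simp [vs]⟩

include hW2 in
lemma good2 : Good W 2 := by
  refine ⟨-X 0, 1, by simp, by simp [hW2, gen3_eq, map_neg], ?_⟩
  simp [evp_X0, vs, map_neg]

include hW3 in
lemma good3 : Good W 3 := by
  refine ⟨-X 1, 1, by simp, by simp [hW3, gen3_eq, map_neg], ?_⟩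
  have h3 : ¬ Even (3:ℤ) := by decide
  simp [evp_X1, vs, h3, map_neg]

include hW4 in
lemma good4 : Good W 4 := by
  refine ⟨X 2 * X 0, 1, by simp, by simp [hW4, gen3_eq, map_mul], ?_⟩
  have h4 : Even (4:ℤ) := by decide
  simp [evp_X0, evp_X2, vs, h4, map_mul]

include hrec in
lemma good_step (n : ℤ) (hn : n ≠ 0) (g0 : Good W n) (g1 : Good W (n+1))
    (g2 : Good W (n+2)) (g3 : Good W (n+3)) : Good W (n+4) := by
  obtain ⟨p0, q0, e0, f0, v0⟩ := g0
  obtain ⟨p1, q1, e1, f1, v1⟩ := g1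
  obtain ⟨p2, q2, e2, f2, v2⟩ := g2
  obtain ⟨p3, q3, e3, f3, v3⟩ := g3
  refine ⟨q0 * ((X 0)^2 * (p3 * p1) * q2^2 + X 1 * p2^2 * (q1 * q3)),
          p0 * (q1 * q2^2 * q3), ?_, ?_, ?_⟩
  · have hp0 : evp p0 ≠ 0 := by
      rw [v0]; exact mul_ne_zero (vs_ne hn) e0
    simp only [map_mul, map_pow]
    exact mul_ne_zero hp0 (mul_ne_zero (mul_ne_zero e1 (pow_ne_zero _ e2)) e3)
  · simp only [map_mul, map_add, map_pow]
    rw [← f0, ← f1, ← f2, ← f3, ← gen3_eq, ← gen3_eq]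
    linear_combination (algK q0 * algK q1 * algK q2 ^ 2 * algK q3) * hrec n
  · simp only [map_mul, map_add, map_pow, evp_X0, evp_X1, v0, v1, v2, v3]
    linear_combination (-(evp q0 * evp q1 * evp q2 ^ 2 * evp q3)) * vs_somos n

include hrec hW1 hW2 hW3 hW4 in
lemma good_all (k : ℕ) : Good W ((k : ℤ) + 1) ∧ Good W ((k : ℤ) + 2) ∧
    Good W ((k : ℤ) + 3) ∧ Good W ((k : ℤ) + 4) := by
  induction k with
  | zero =>
    exact ⟨goodCongr (by norm_num) (good1 hW1), goodCongr (by norm_num) (good2 hW2),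
      goodCongr (by norm_num) (good3 hW3), goodCongr (by norm_num) (good4 hW4)⟩
  | succ m ih =>
    obtain ⟨a1, a2, a3, a4⟩ := ih
    have a5 : Good W ((m : ℤ) + 5) := by
      have := good_step hrec ((m : ℤ) + 1) (by omega) a1
        (goodCongr (by ring) a2) (goodCongr (by ring) a3) (goodCongr (by ring) a4)
      exact goodCongr (by ring) this
    exact ⟨goodCongr (by push_cast; ring) a2, goodCongr (by push_cast; ring) a3,
      goodCongr (by push_cast; ring) a4, goodCongr (by push_cast; ring) a5⟩

include hrec hWodd hW1 hW2 hW3 hW4 in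
lemma Wne (n : ℤ) (hn : n ≠ 0) : W n ≠ 0 := by
  have main : ∀ m : ℤ, 0 < m → W m ≠ 0 := by
    intro m hm
    obtain ⟨k, hk⟩ : ∃ k : ℕ, m = (k : ℤ) + 1 := ⟨(m-1).toNat, by omega⟩
    obtain ⟨p, q, e, f, v⟩ := (good_all hrec hW1 hW2 hW3 hW4 k).1
    rw [hk]
    intro hz
    rw [hz, zero_mul] at f
    have hp : p = 0 := algK_inj (by simpa using f.symm)
    rw [hp, map_zero] at v
    exact (mul_ne_zero (vs_ne (by omega)) e) v.symm
  rcases lt_or_gt_of_ne hn with h | h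
  · intro hz
    have hne : W (-n) ≠ 0 := main (-n) (by omega)
    rw [hWodd, hz, neg_zero] at hne
    exact hne rfl
  · exact main n h

/-- the invariant constant κ = (i - a⁴)/b. -/
noncomputable def kap : K3 := (gen3 2 - gen3 0^4) / gen3 1

lemma hkap : kap * gen3 1 = gen3 2 - gen3 0^4 := div_mul_cancel₀ _ gen1_ne

/-- Somos-4 defect. -/
noncomputable def S4e (W : ℤ → K3) (n : ℤ) : K3 :=
  W (n+4) * W n - W 2^2 * (W (n+3) * W (n+1)) + W 3 * (W (n+2))^2

/-- the L-invariant relation expression. -/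
noncomputable def LLe (W : ℤ → K3) (n : ℤ) : K3 :=
  W (n+1)^2 * W (n+4) + W (n+3)^2 * W n + W 2^2 * (W (n+2))^3
    - kap * (W (n+1) * W (n+2) * W (n+3))

include hrec hW2 hW3 in
lemma hS4 (n : ℤ) : S4e W n = 0 := by
  have hsq : W 2^2 = gen3 0^2 := by rw [hW2]; ring
  unfold S4e
  linear_combination hrec n - (W (n+3) * W (n+1)) * hsq + (W (n+2))^2 * hW3

include hrec hW1 hW2 hW3 hW4 in
lemma hL1 : LLe W 1 = 0 := by
  have h5 := hrec 1
  rw [show (1:ℤ)+4 = 5 from by norm_num, show (1:ℤ)+3 = 4 from by norm_num,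
    show (1:ℤ)+2 = 3 from by norm_num, show (1:ℤ)+1 = 2 from by norm_num,
    hW1, mul_one, hW2, hW3, hW4] at h5
  unfold LLe
  rw [show (1:ℤ)+4 = 5 from by norm_num, show (1:ℤ)+3 = 4 from by norm_num,
    show (1:ℤ)+2 = 3 from by norm_num, show (1:ℤ)+1 = 2 from by norm_num,
    hW1, hW2, hW3, hW4]
  linear_combination (gen3 0^2) * h5 - (gen3 0^2 * gen3 2) * hkap

include hrec hW2 hW3 in
lemma Lshift (n : ℤ) : W (n+1) * LLe W (n+1) = W (n+4) * LLe W n := by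
  have h1 := hS4 hrec hW2 hW3 (n+1)
  have h0 := hS4 hrec hW2 hW3 n
  unfold S4e at h1 h0
  rw [show (n+1)+4 = n+5 from by ring, show (n+1)+3 = n+4 from by ring,
      show (n+1)+2 = n+3 from by ring, show (n+1)+1 = n+2 from by ring] at h1
  unfold LLe
  rw [show (n+1)+4 = n+5 from by ring, show (n+1)+3 = n+4 from by ring,
      show (n+1)+2 = n+3 from by ring, show (n+1)+1 = n+2 from by ring]
  linear_combination (W (n+2))^2 * h1 - (W (n+3))^2 * h0

include hrec hWodd hW0 hW1 hW2 hW3 hW4 in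
lemma hLL (n : ℤ) : LLe W n = 0 := by
  have wne := Wne hrec hWodd hW1 hW2 hW3 hW4
  have lsh := Lshift hrec hW2 hW3 (W := W)
  have l1 : LLe W 1 = 0 := hL1 hrec hW1 hW2 hW3 hW4
  -- nonneg indices
  have pos : ∀ k : ℕ, LLe W ((k:ℤ)+1) = 0 := by
    intro k
    induction k with
    | zero => norm_num; exact l1
    | succ m ih =>
      have h := lsh ((m:ℤ)+1)
      rw [show (m:ℤ)+1+1 = (m:ℤ)+2 from by ring, show (m:ℤ)+1+4 = (m:ℤ)+5 from by ring] at h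
      rw [ih, mul_zero] at h
      have h2 : W ((m:ℤ)+2) ≠ 0 := wne _ (by omega)
      have := mul_eq_zero.mp h
      rcases this with h' | h'
      · exact absurd h' h2
      · rw [show ((m+1:ℕ):ℤ)+1 = (m:ℤ)+2 from by push_cast; ring]
        exact h'
  have nonneg : ∀ m : ℤ, 0 ≤ m → LLe W m = 0 := by
    intro m hm
    rcases eq_or_lt_of_le hm with h | h
    · -- m = 0 : from Lshift at 0 : W 1 * LLe 1 = W 4 * LLe 0
      have h0 := lsh 0
      rw [show (0:ℤ)+1 = 1 from by norm_num, show (0:ℤ)+4 = 4 from by norm_num, l1,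
        mul_zero] at h0
      rcases mul_eq_zero.mp h0.symm with h' | h'
      · exact absurd h' (wne 4 (by omega))
      · rw [← h]; exact h'
    · have : m = ((m-1).toNat : ℤ) + 1 := by omega
      rw [this]; exact pos _
  -- negative small cases
  have lm1 : LLe W (-1) = 0 := by
    have h0 := lsh (-1)
    rw [show (-1:ℤ)+1 = 0 from by norm_num, show (-1:ℤ)+4 = 3 from by norm_num, hW0,
      zero_mul] at h0
    rcases mul_eq_zero.mp h0.symm with h' | h'
    · exact absurd h' (wne 3 (by omega))
    · exact h'
  have lm2 : LLe W (-2) = 0 := by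
    have h0 := lsh (-2)
    rw [show (-2:ℤ)+1 = -1 from by ring, show (-2:ℤ)+4 = 2 from by ring, lm1, mul_zero] at h0
    rcases mul_eq_zero.mp h0.symm with h' | h'
    · exact absurd h' (wne 2 (by omega))
    · exact h'
  have lm3 : LLe W (-3) = 0 := by
    have h0 := lsh (-3)
    rw [show (-3:ℤ)+1 = -2 from by ring, show (-3:ℤ)+4 = 1 from by ring, lm2, mul_zero, hW1,
      one_mul] at h0
    exact h0.symm
  -- reflection
  have lneg : ∀ m : ℤ, LLe W (-4-m) = - LLe W m := by
    intro m
    have w1 : W (-4-m+1) = - W (m+3) := by rw [show (-4-m+1 : ℤ) = -(m+3) from by ring, hWodd]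
    have w2 : W (-4-m+2) = - W (m+2) := by rw [show (-4-m+2 : ℤ) = -(m+2) from by ring, hWodd]
    have w3 : W (-4-m+3) = - W (m+1) := by rw [show (-4-m+3 : ℤ) = -(m+1) from by ring, hWodd]
    have w4 : W (-4-m+4) = - W m := by rw [show (-4-m+4 : ℤ) = -m from by ring, hWodd]
    have w0 : W (-4-m) = - W (m+4) := by rw [show (-4-m : ℤ) = -(m+4) from by ring, hWodd]
    unfold LLe
    rw [w1, w2, w3, w4, w0]
    ring
  rcases le_or_gt 0 n with h | h
  · exact nonneg n h
  · rcases le_or_gt (-3) n with h2 | h2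
    · interval_cases n
      · exact lm3
      · exact lm2
      · exact lm1
    · have hx : LLe W (-4-(-4-n)) = - LLe W (-4-n) := lneg (-4-n)
      rw [show (-4-(-4-n) : ℤ) = n from by ring, nonneg (-4-n) (by omega), neg_zero] at hx
      exact hx

/-- the master three-term relation expression `(‡δ,s)`. -/
noncomputable def Ze (W : ℤ → K3) (δ s : ℤ) : K3 :=
  W (δ+1) * (W (s+δ-1) * W (s+1)) - W 2 * W δ * (W (s+δ) * W s)
    + W (δ-1) * (W (s+δ+1) * W (s-1))

include hWodd hW0 hW1 in
lemma ze_s0 (δ : ℤ) : Ze W δ 0 = 0 := by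
  have hm1 : W (-1) = - W 1 := hWodd 1
  unfold Ze
  rw [show (0:ℤ)+δ+1 = δ+1 from by ring, show (0:ℤ)+δ-1 = δ-1 from by ring,
    show (0:ℤ)+δ = δ from by ring, show (0:ℤ)+1 = 1 from by ring,
    show (0:ℤ)-1 = -1 from by ring, hW0, hm1, hW1]
  ring

include hWodd hW0 hW1 hW2 in
lemma ze_sm1 (δ : ℤ) : Ze W δ (-1) = 0 := by
  have hm1 : W (-1) = - W 1 := hWodd 1
  have hm2 : W (-2) = - W 2 := hWodd 2
  unfold Ze
  rw [show (-1:ℤ)+δ+1 = δ from by ring, show (-1:ℤ)+δ-1 = δ-2 from by ring,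
    show (-1:ℤ)+δ = δ-1 from by ring, show (-1:ℤ)+1 = 0 from by ring,
    show (-1:ℤ)-1 = -2 from by ring, hW0, hm1, hm2, hW1]
  ring

include hWodd hW0 hW1 in
lemma ze_d0 (s : ℤ) : Ze W 0 s = 0 := by
  have hm1 : W (-1) = - W 1 := hWodd 1
  unfold Ze
  rw [show s+(0:ℤ)+1 = s+1 from by ring, show s+(0:ℤ)-1 = s-1 from by ring,
    show s+(0:ℤ) = s from by ring, show (0:ℤ)+1 = 1 from by ring,
    show (0:ℤ)-1 = -1 from by ring, hW0, hm1]
  ring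

include hW0 hW1 in
lemma ze_d1 (s : ℤ) : Ze W 1 s = 0 := by
  unfold Ze
  rw [show s+(1:ℤ)+1 = s+2 from by ring, show s+(1:ℤ)-1 = s from by ring,
    show s+(1:ℤ) = s+1 from by ring, show (1:ℤ)+1 = 2 from by ring,
    show (1:ℤ)-1 = 0 from by ring, hW0, hW1]
  ring

include hrec hW1 hW2 hW3 in
lemma ze_d2 (s : ℤ) : Ze W 2 s = 0 := by
  have h := hS4 hrec hW2 hW3 (s-1)
  unfold S4e at h
  rw [show s-1+4 = s+3 from by ring, show s-1+3 = s+2 from by ring,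
    show s-1+2 = s+1 from by ring, show s-1+1 = s from by ring] at h
  unfold Ze
  rw [show s+(2:ℤ)+1 = s+3 from by ring, show s+(2:ℤ)-1 = s+1 from by ring,
    show s+(2:ℤ) = s+2 from by ring, show (2:ℤ)+1 = 3 from by ring,
    show (2:ℤ)-1 = 1 from by ring, hW1]
  linear_combination h

include hW2 hW3 hW4 in
lemma hW4k : W 4 = kap * W 2 * W 3 - W 2^5 := by
  rw [hW2, hW3, hW4]
  linear_combination (-(gen3 0)) * hkap

include hrec hWodd hW0 hW1 hW2 hW3 hW4 in
lemma ze_d3 (s : ℤ) : Ze W 3 s = 0 := by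
  rcases eq_or_ne s 0 with rfl | hs
  · exact ze_s0 hWodd hW0 hW1 3
  · have h1 := hS4 hrec hW2 hW3 (s-1)
    have h2 := hS4 hrec hW2 hW3 s
    have h3 := hLL hrec hWodd hW0 hW1 hW2 hW3 hW4 (s-1)
    have h4 := hW4k hW2 hW3 hW4
    unfold S4e at h1 h2
    unfold LLe at h3
    rw [show s-1+4 = s+3 from by ring, show s-1+3 = s+2 from by ring,
      show s-1+2 = s+1 from by ring, show s-1+1 = s from by ring] at h1 h3
    have key : Ze W 3 s * W s = 0 := by
      unfold Ze
      rw [show s+(3:ℤ)+1 = s+4 from by ring, show s+(3:ℤ)-1 = s+2 from by ring,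
        show s+(3:ℤ) = s+3 from by ring, show (3:ℤ)+1 = 4 from by ring,
        show (3:ℤ)-1 = 2 from by ring]
      linear_combination (W 2^3 * W (s+1)) * h1 + (W 2 * W (s-1)) * h2
        - (W 2 * W 3) * h3 + (W (s+2) * W (s+1) * W s) * h4
    rcases mul_eq_zero.mp key with h | h
    · exact h
    · exact absurd h (Wne hrec hWodd hW1 hW2 hW3 hW4 s hs)

include hrec hWodd hW0 hW1 hW2 hW3 hW4 in
lemma ze_step (δ s : ℤ) (hδ : 3 ≤ δ) (h1 : Ze W δ s = 0) (h2 : Ze W (δ-1) (s+1) = 0)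
    (h3 : Ze W (δ-1) (s+2) = 0) : Ze W (δ+1) s = 0 := by
  rcases eq_or_ne s (-1) with rfl | hs
  · exact ze_sm1 hWodd hW0 hW1 hW2 (δ+1)
  · have h4 := hS4 hrec hW2 hW3 (s-1)
    have h5 := hS4 hrec hW2 hW3 (δ-2)
    unfold S4e at h4 h5
    rw [show s-1+4 = s+3 from by ring, show s-1+3 = s+2 from by ring,
      show s-1+2 = s+1 from by ring, show s-1+1 = s from by ring] at h4
    rw [show δ-2+4 = δ+2 from by ring, show δ-2+3 = δ+1 from by ring,
      show δ-2+2 = δ from by ring, show δ-2+1 = δ-1 from by ring] at h5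
    unfold Ze at h1 h2 h3
    rw [show s+1+(δ-1)+1 = s+δ+1 from by ring, show s+1+(δ-1)-1 = s+δ-1 from by ring,
      show s+1+(δ-1) = s+δ from by ring, show δ-1+1 = δ from by ring,
      show δ-1-1 = δ-2 from by ring, show s+1+1 = s+2 from by ring,
      show s+1-1 = s from by ring] at h2
    rw [show s+2+(δ-1)+1 = s+δ+2 from by ring, show s+2+(δ-1)-1 = s+δ from by ring,
      show s+2+(δ-1) = s+δ+1 from by ring, show δ-1+1 = δ from by ring,
      show δ-1-1 = δ-2 from by ring, show s+2+1 = s+3 from by ring,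
      show s+2-1 = s+1 from by ring] at h3
    have key : Ze W (δ+1) s * (W (s+1) * W (δ-2)) = 0 := by
      unfold Ze
      rw [show s+(δ+1)+1 = s+δ+2 from by ring, show s+(δ+1)-1 = s+δ from by ring,
        show s+(δ+1) = s+δ+1 from by ring, show δ+1+1 = δ+2 from by ring,
        show δ+1-1 = δ from by ring]
      linear_combination (W 2 * W (s+2) * W δ) * h1 - (W 2 * W (s+1) * W (δ+1)) * h2
        + (W (s-1) * W δ) * h3 - (W (s+δ) * W δ^2) * h4 + (W (s+1)^2 * W (s+δ)) * h5
    rcases mul_eq_zero.mp key with h | h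
    · exact h
    · rcases mul_eq_zero.mp h with h' | h'
      · exact absurd h' (Wne hrec hWodd hW1 hW2 hW3 hW4 (s+1) (by omega))
      · exact absurd h' (Wne hrec hWodd hW1 hW2 hW3 hW4 (δ-2) (by omega))

include hrec hWodd hW0 hW1 hW2 hW3 hW4 in
lemma hZ (k : ℕ) (s : ℤ) : Ze W k s = 0 := by
  induction k using Nat.strong_induction_on generalizing s with
  | _ k ih =>
    match k, ih with
    | 0, _ => exact ze_d0 hWodd hW0 hW1 s
    | 1, _ => exact ze_d1 hW0 hW1 s
    | 2, _ => exact ze_d2 hrec hW1 hW2 hW3 s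
    | 3, _ => exact ze_d3 hrec hWodd hW0 hW1 hW2 hW3 hW4 s
    | (m+4), ih =>
      have c1 : ((m+4:ℕ):ℤ) = ((m:ℤ)+3)+1 := by push_cast; ring
      have c2 : ((m+3:ℕ):ℤ) = (m:ℤ)+3 := by push_cast; ring
      have c3 : ((m+2:ℕ):ℤ) = ((m:ℤ)+3)-1 := by push_cast; ring
      rw [c1]
      refine ze_step hrec hWodd hW0 hW1 hW2 hW3 hW4 ((m:ℤ)+3) s (by omega) ?_ ?_ ?_
      · have := ih (m+3) (by omega) s; rwa [c2] at this
      · have := ih (m+2) (by omega) (s+1); rwa [c3] at this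
      · have := ih (m+2) (by omega) (s+2); rwa [c3] at this

include hrec hWodd hW0 hW1 hW2 hW3 hW4 in
lemma hR (M : ℕ) (a : ℤ) : W (a + (M:ℤ)) * W (a - (M:ℤ)) =
    W (a+1) * W (a-1) * (W ((M:ℤ)))^2 - W ((M:ℤ)+1) * W ((M:ℤ)-1) * (W a)^2 := by
  induction M using Nat.strong_induction_on with
  | _ M ih =>
    match M, ih with
    | 0, _ =>
      have hm1 : W (-1) = - W 1 := hWodd 1
      rw [Nat.cast_zero, show a+(0:ℤ) = a from by ring, show a-(0:ℤ) = a from by ring,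
        show (0:ℤ)+1 = 1 from by ring, show (0:ℤ)-1 = -1 from by ring, hW0, hm1, hW1]
      ring
    | 1, _ =>
      rw [Nat.cast_one, show (1:ℤ)+1 = 2 from by ring, show (1:ℤ)-1 = 0 from by ring,
        hW0, hW1]
      ring
    | (m+2), ih =>
      have ih1 := ih (m+1) (by omega)
      have ih0 := ih m (by omega)
      rw [show ((m+1:ℕ):ℤ) = (m:ℤ)+1 from by push_cast; ring,
        show a+((m:ℤ)+1) = a+(m:ℤ)+1 from by ring,
        show a-((m:ℤ)+1) = a-(m:ℤ)-1 from by ring,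
        show (m:ℤ)+1+1 = (m:ℤ)+2 from by ring, show (m:ℤ)+1-1 = (m:ℤ) from by ring] at ih1
      rw [show (m:ℤ)+1 = (m:ℤ)+1 from rfl] at ih0
      -- zh1
      have zh1 := hZ hrec hWodd hW0 hW1 hW2 hW3 hW4 (2*m+2) (a-(m:ℤ)-1)
      rw [show ((2*m+2:ℕ):ℤ) = 2*(m:ℤ)+2 from by push_cast; ring] at zh1
      unfold Ze at zh1
      rw [show a-(m:ℤ)-1+(2*(m:ℤ)+2)+1 = a+(m:ℤ)+2 from by ring,
        show a-(m:ℤ)-1+(2*(m:ℤ)+2)-1 = a+(m:ℤ) from by ring,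
        show a-(m:ℤ)-1+(2*(m:ℤ)+2) = a+(m:ℤ)+1 from by ring,
        show a-(m:ℤ)-1+1 = a-(m:ℤ) from by ring,
        show a-(m:ℤ)-1-1 = a-(m:ℤ)-2 from by ring,
        show 2*(m:ℤ)+2+1 = 2*(m:ℤ)+3 from by ring,
        show 2*(m:ℤ)+2-1 = 2*(m:ℤ)+1 from by ring] at zh1
      -- sc1
      have sc1 := hZ hrec hWodd hW0 hW1 hW2 hW3 hW4 (2*m+2) (-((m:ℤ)+1))
      rw [show ((2*m+2:ℕ):ℤ) = 2*(m:ℤ)+2 from by push_cast; ring] at sc1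
      unfold Ze at sc1
      rw [show -((m:ℤ)+1)+(2*(m:ℤ)+2)+1 = (m:ℤ)+2 from by ring,
        show -((m:ℤ)+1)+(2*(m:ℤ)+2)-1 = (m:ℤ) from by ring,
        show -((m:ℤ)+1)+(2*(m:ℤ)+2) = (m:ℤ)+1 from by ring,
        show -((m:ℤ)+1)+1 = -(m:ℤ) from by ring,
        show -((m:ℤ)+1)-1 = -((m:ℤ)+2) from by ring,
        show 2*(m:ℤ)+2+1 = 2*(m:ℤ)+3 from by ring,
        show 2*(m:ℤ)+2-1 = 2*(m:ℤ)+1 from by ring] at sc1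
      simp only [hWodd] at sc1
      -- sc2
      have sc2 := hZ hrec hWodd hW0 hW1 hW2 hW3 hW4 (2*m+2) (-(m:ℤ))
      rw [show ((2*m+2:ℕ):ℤ) = 2*(m:ℤ)+2 from by push_cast; ring] at sc2
      unfold Ze at sc2
      rw [show -(m:ℤ)+(2*(m:ℤ)+2)+1 = (m:ℤ)+3 from by ring,
        show -(m:ℤ)+(2*(m:ℤ)+2)-1 = (m:ℤ)+1 from by ring,
        show -(m:ℤ)+(2*(m:ℤ)+2) = (m:ℤ)+2 from by ring,
        show -(m:ℤ)+1 = -((m:ℤ)-1) from by ring,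
        show -(m:ℤ)-1 = -((m:ℤ)+1) from by ring,
        show 2*(m:ℤ)+2+1 = 2*(m:ℤ)+3 from by ring,
        show 2*(m:ℤ)+2-1 = 2*(m:ℤ)+1 from by ring] at sc2
      simp only [hWodd] at sc2
      -- assemble
      have hne : W (2*(m:ℤ)+1) ≠ 0 :=
        Wne hrec hWodd hW1 hW2 hW3 hW4 _ (by omega)
      have key : W (2*(m:ℤ)+1) * (W (a+(m:ℤ)+2) * W (a-(m:ℤ)-2) -
          (W (a+1) * W (a-1) * (W ((m:ℤ)+2))^2 - W ((m:ℤ)+3) * W ((m:ℤ)+1) * (W a)^2)) = 0 := by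
        linear_combination zh1 + (W 2 * W (2*(m:ℤ)+2)) * ih1 - (W (2*(m:ℤ)+3)) * ih0
          + (W (a+1) * W (a-1)) * sc1 - ((W a)^2) * sc2
      have heq := sub_eq_zero.mp ((mul_eq_zero.mp key).resolve_left hne)
      rw [show ((m+2:ℕ):ℤ) = (m:ℤ)+2 from by push_cast; ring,
        show a+((m:ℤ)+2) = a+(m:ℤ)+2 from by ring,
        show a-((m:ℤ)+2) = a-(m:ℤ)-2 from by ring,
        show (m:ℤ)+2+1 = (m:ℤ)+3 from by ring,
        show (m:ℤ)+2-1 = (m:ℤ)+1 from by ring]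
      exact heq

include hrec hWodd hW0 hW1 hW2 hW3 hW4 in
lemma hOddJ (j : ℕ) : W (2*(j:ℤ)+5) =
    W ((j:ℤ)+4) * (W ((j:ℤ)+2))^3 - W ((j:ℤ)+1) * (W ((j:ℤ)+3))^3 := by
  have h := hR hrec hWodd hW0 hW1 hW2 hW3 hW4 (j+2) ((j:ℤ)+3)
  rw [show ((j+2:ℕ):ℤ) = (j:ℤ)+2 from by push_cast; ring,
    show (j:ℤ)+3+((j:ℤ)+2) = 2*(j:ℤ)+5 from by ring,
    show (j:ℤ)+3-((j:ℤ)+2) = 1 from by ring,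
    show (j:ℤ)+3+1 = (j:ℤ)+4 from by ring,
    show (j:ℤ)+3-1 = (j:ℤ)+2 from by ring,
    show (j:ℤ)+2+1 = (j:ℤ)+3 from by ring,
    show (j:ℤ)+2-1 = (j:ℤ)+1 from by ring, hW1, mul_one] at h
  linear_combination h

include hrec hWodd hW0 hW1 hW2 hW3 hW4 in
lemma hEvenJ (j : ℕ) : W (2*(j:ℤ)+6) * W 2 =
    W ((j:ℤ)+5) * W ((j:ℤ)+3) * (W ((j:ℤ)+2))^2
      - W ((j:ℤ)+3) * W ((j:ℤ)+1) * (W ((j:ℤ)+4))^2 := by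
  have h := hR hrec hWodd hW0 hW1 hW2 hW3 hW4 (j+2) ((j:ℤ)+4)
  rw [show ((j+2:ℕ):ℤ) = (j:ℤ)+2 from by push_cast; ring,
    show (j:ℤ)+4+((j:ℤ)+2) = 2*(j:ℤ)+6 from by ring,
    show (j:ℤ)+4-((j:ℤ)+2) = 2 from by ring,
    show (j:ℤ)+4+1 = (j:ℤ)+5 from by ring,
    show (j:ℤ)+4-1 = (j:ℤ)+3 from by ring,
    show (j:ℤ)+2+1 = (j:ℤ)+3 from by ring,
    show (j:ℤ)+2-1 = (j:ℤ)+1 from by ring] at h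
  linear_combination h

/-- the target subring `ℤ[a², b, i]`. -/
noncomputable def SR : Subring K3 := Subring.closure {(gen3 0)^2, gen3 1, gen3 2}

lemma hx2S : (gen3 0)^2 ∈ SR := Subring.subset_closure (by left; rfl)
lemma hyS : gen3 1 ∈ SR := Subring.subset_closure (by right; left; rfl)
lemma hzS : gen3 2 ∈ SR := Subring.subset_closure (by right; right; rfl)

include hrec hWodd hW0 hW1 hW2 hW3 hW4 in
lemma memb (k : ℕ) : (¬ Even k → W (k:ℤ) ∈ SR) ∧
    (Even k → ∃ r ∈ SR, W (k:ℤ) = gen3 0 * r) := by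
  induction k using Nat.strong_induction_on with
  | _ k ih =>
    match k, ih with
    | 0, _ =>
      refine ⟨fun h => absurd Even.zero h, fun _ => ⟨0, SR.zero_mem, ?_⟩⟩
      rw [Nat.cast_zero, hW0]; ring
    | 1, _ =>
      refine ⟨fun _ => ?_, fun h => absurd h (by decide)⟩
      rw [Nat.cast_one, hW1]; exact SR.one_mem
    | 2, _ =>
      refine ⟨fun h => absurd (by decide) h, fun _ => ⟨-1, SR.neg_mem SR.one_mem, ?_⟩⟩
      rw [show ((2:ℕ):ℤ) = 2 from by norm_num, hW2]; ring
    | 3, _ =>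
      refine ⟨fun _ => ?_, fun h => absurd h (by decide)⟩
      rw [show ((3:ℕ):ℤ) = 3 from by norm_num, hW3]
      exact SR.neg_mem hyS
    | 4, _ =>
      refine ⟨fun h => absurd (by decide) h, fun _ => ⟨gen3 2, hzS, ?_⟩⟩
      rw [show ((4:ℕ):ℤ) = 4 from by norm_num, hW4]; ring
    | (n+5), ih =>
      rcases Nat.even_or_odd (n+5) with hk | hk
      · -- even, k = 2j+6
        obtain ⟨j, rfl⟩ : ∃ j, n = 2*j+1 := ⟨n/2, by rw [Nat.even_iff] at hk; omega⟩
        refine ⟨fun h => absurd hk h, fun _ => ?_⟩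
        have i1 := ih (j+1) (by omega)
        have i2 := ih (j+2) (by omega)
        have i3 := ih (j+3) (by omega)
        have i4 := ih (j+4) (by omega)
        have i5 := ih (j+5) (by omega)
        rw [show ((j+1:ℕ):ℤ) = (j:ℤ)+1 from by push_cast; ring] at i1
        rw [show ((j+2:ℕ):ℤ) = (j:ℤ)+2 from by push_cast; ring] at i2
        rw [show ((j+3:ℕ):ℤ) = (j:ℤ)+3 from by push_cast; ring] at i3
        rw [show ((j+4:ℕ):ℤ) = (j:ℤ)+4 from by push_cast; ring] at i4
        rw [show ((j+5:ℕ):ℤ) = (j:ℤ)+5 from by push_cast; ring] at i5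
        have heq := hEvenJ hrec hWodd hW0 hW1 hW2 hW3 hW4 j
        have hcast : ((2*j+1+5:ℕ):ℤ) = 2*(j:ℤ)+6 := by push_cast; ring
        rw [hcast]
        -- get E = x^2 * e with e ∈ SR
        obtain ⟨e, heS, hE⟩ : ∃ e ∈ SR, W ((j:ℤ)+5) * W ((j:ℤ)+3) * (W ((j:ℤ)+2))^2
            - W ((j:ℤ)+3) * W ((j:ℤ)+1) * (W ((j:ℤ)+4))^2 = (gen3 0)^2 * e := by
          rcases Nat.even_or_odd j with hj | hj
          · obtain ⟨r2, hr2, e2⟩ := i2.2 (by rw [Nat.even_iff] at hj ⊢; omega)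
            obtain ⟨r4, hr4, e4⟩ := i4.2 (by rw [Nat.even_iff] at hj ⊢; omega)
            have o1 := i1.1 (by rw [Nat.even_iff] at hj ⊢; omega)
            have o3 := i3.1 (by rw [Nat.even_iff] at hj ⊢; omega)
            have o5 := i5.1 (by rw [Nat.even_iff] at hj ⊢; omega)
            refine ⟨W ((j:ℤ)+5) * W ((j:ℤ)+3) * r2^2 - W ((j:ℤ)+3) * W ((j:ℤ)+1) * r4^2,
              SR.sub_mem (SR.mul_mem (SR.mul_mem o5 o3) (SR.pow_mem hr2 2))
                (SR.mul_mem (SR.mul_mem o3 o1) (SR.pow_mem hr4 2)), ?_⟩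
            rw [e2, e4]; ring
          · obtain ⟨r1, hr1, e1⟩ := i1.2 (by rw [Nat.odd_iff] at hj; rw [Nat.even_iff]; omega)
            obtain ⟨r3, hr3, e3⟩ := i3.2 (by rw [Nat.odd_iff] at hj; rw [Nat.even_iff]; omega)
            obtain ⟨r5, hr5, e5⟩ := i5.2 (by rw [Nat.odd_iff] at hj; rw [Nat.even_iff]; omega)
            have o2 := i2.1 (by rw [Nat.odd_iff] at hj; rw [Nat.even_iff]; omega)
            have o4 := i4.1 (by rw [Nat.odd_iff] at hj; rw [Nat.even_iff]; omega)
            refine ⟨r5 * r3 * (W ((j:ℤ)+2))^2 - r3 * r1 * (W ((j:ℤ)+4))^2,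
              SR.sub_mem (SR.mul_mem (SR.mul_mem hr5 hr3) (SR.pow_mem o2 2))
                (SR.mul_mem (SR.mul_mem hr3 hr1) (SR.pow_mem o4 2)), ?_⟩
            rw [e1, e3, e5]; ring
        refine ⟨-e, SR.neg_mem heS, ?_⟩
        -- W(2j+6) * W 2 = x^2 * e, W 2 = -x  ⟹  W(2j+6) = x * (-e)
        have hxne := gen0_ne
        have : gen3 0 * (W (2*(j:ℤ)+6) - gen3 0 * (-e)) = 0 := by
          rw [hE] at heq
          rw [hW2] at heq
          linear_combination -heq
        rcases mul_eq_zero.mp this with h' | h'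
        · exact absurd h' hxne
        · exact sub_eq_zero.mp h'
      · -- odd, k = 2j+5
        obtain ⟨j, rfl⟩ : ∃ j, n = 2*j := ⟨n/2, by rw [Nat.odd_iff] at hk; omega⟩
        refine ⟨fun _ => ?_, fun h => absurd h (by rw [Nat.odd_iff] at hk; rw [Nat.even_iff]; omega)⟩
        have i1 := ih (j+1) (by omega)
        have i2 := ih (j+2) (by omega)
        have i3 := ih (j+3) (by omega)
        have i4 := ih (j+4) (by omega)
        rw [show ((j+1:ℕ):ℤ) = (j:ℤ)+1 from by push_cast; ring] at i1
        rw [show ((j+2:ℕ):ℤ) = (j:ℤ)+2 from by push_cast; ring] at i2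
        rw [show ((j+3:ℕ):ℤ) = (j:ℤ)+3 from by push_cast; ring] at i3
        rw [show ((j+4:ℕ):ℤ) = (j:ℤ)+4 from by push_cast; ring] at i4
        have heq := hOddJ hrec hWodd hW0 hW1 hW2 hW3 hW4 j
        have hcast : ((2*j+5:ℕ):ℤ) = 2*(j:ℤ)+5 := by push_cast; ring
        rw [hcast, heq]
        rcases Nat.even_or_odd j with hj | hj
        · obtain ⟨r2, hr2, e2⟩ := i2.2 (by rw [Nat.even_iff] at hj ⊢; omega)
          obtain ⟨r4, hr4, e4⟩ := i4.2 (by rw [Nat.even_iff] at hj ⊢; omega)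
          have o1 := i1.1 (by rw [Nat.even_iff] at hj; rw [Nat.even_iff]; omega)
          have o3 := i3.1 (by rw [Nat.even_iff] at hj; rw [Nat.even_iff]; omega)
          rw [e2, e4]
          have hrw : (gen3 0 * r4) * (gen3 0 * r2)^3 - W ((j:ℤ)+1) * (W ((j:ℤ)+3))^3
              = (gen3 0^2 * gen3 0^2) * (r4 * r2^3) - W ((j:ℤ)+1) * (W ((j:ℤ)+3))^3 := by ring
          rw [hrw]
          exact SR.sub_mem (SR.mul_mem (SR.mul_mem hx2S hx2S)
              (SR.mul_mem hr4 (SR.pow_mem hr2 3)))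
            (SR.mul_mem o1 (SR.pow_mem o3 3))
        · obtain ⟨r1, hr1, e1⟩ := i1.2 (by rw [Nat.odd_iff] at hj; rw [Nat.even_iff]; omega)
          obtain ⟨r3, hr3, e3⟩ := i3.2 (by rw [Nat.odd_iff] at hj; rw [Nat.even_iff]; omega)
          have o2 := i2.1 (by rw [Nat.odd_iff] at hj; rw [Nat.even_iff]; omega)
          have o4 := i4.1 (by rw [Nat.odd_iff] at hj; rw [Nat.even_iff]; omega)
          rw [e1, e3]
          have hrw : W ((j:ℤ)+4) * (W ((j:ℤ)+2))^3 - (gen3 0 * r1) * (gen3 0 * r3)^3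
              = W ((j:ℤ)+4) * (W ((j:ℤ)+2))^3 - (gen3 0^2 * gen3 0^2) * (r1 * r3^3) := by ring
          rw [hrw]
          exact SR.sub_mem (SR.mul_mem o4 (SR.pow_mem o2 3))
            (SR.mul_mem (SR.mul_mem hx2S hx2S) (SR.mul_mem hr1 (SR.pow_mem hr3 3)))

end Main
end EDSaux


/-- Polynomial representation for elliptic divisibility sequences: the odd-index terms
lie in `ℤ[a², b, i]` and the even-index terms lie in `a · ℤ[a², b, i]`. -/
theorem eds_polynomial_representation (W : ℤ → FractionRing (MvPolynomial (Fin 3) ℤ))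
    (hrec : ∀ n : ℤ,
      W (n + 4) * W n = (gen3 0) ^ 2 * (W (n + 3) * W (n + 1)) + gen3 1 * (W (n + 2)) ^ 2)
    (hWodd : ∀ n : ℤ, W (-n) = -W n)
    (hW0 : W 0 = 0) (hW1 : W 1 = 1) (hW2 : W 2 = -gen3 0) (hW3 : W 3 = -gen3 1)
    (hW4 : W 4 = gen3 2 * gen3 0) :
    ∀ n : ℤ, W (2 * n - 1) ∈ Subring.closure {(gen3 0) ^ 2, gen3 1, gen3 2} ∧
      ∃ r ∈ Subring.closure {(gen3 0) ^ 2, gen3 1, gen3 2}, W (2 * n) = gen3 0 * r := by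
  intro n
  have hm := EDSaux.memb hrec hWodd hW0 hW1 hW2 hW3 hW4
  constructor
  · show W (2*n-1) ∈ EDSaux.SR
    rcases le_or_gt 1 n with h | h
    · have hk : (((2*n-1).toNat : ℕ) : ℤ) = 2*n-1 := Int.toNat_of_nonneg (by omega)
      have hodd : ¬ Even ((2*n-1).toNat) := by
        rw [← Int.even_coe_nat, hk]
        rintro ⟨t, ht⟩; omega
      have := (hm ((2*n-1).toNat)).1 hodd
      rwa [hk] at this
    · have h1 := hWodd (1-2*n)
      rw [show -(1-2*n) = 2*n-1 from by ring] at h1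
      rw [h1]
      refine EDSaux.SR.neg_mem ?_
      have hk : (((1-2*n).toNat : ℕ) : ℤ) = 1-2*n := Int.toNat_of_nonneg (by omega)
      have hodd : ¬ Even ((1-2*n).toNat) := by
        rw [← Int.even_coe_nat, hk]
        rintro ⟨t, ht⟩; omega
      have := (hm ((1-2*n).toNat)).1 hodd
      rwa [hk] at this
  · show ∃ r ∈ EDSaux.SR, W (2*n) = gen3 0 * r
    rcases le_or_gt 0 n with h | h
    · have hk : (((2*n).toNat : ℕ) : ℤ) = 2*n := Int.toNat_of_nonneg (by omega)
      have hev : Even ((2*n).toNat) := by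
        rw [← Int.even_coe_nat, hk]
        exact ⟨n, by ring⟩
      obtain ⟨r, hr, he⟩ := (hm ((2*n).toNat)).2 hev
      rw [hk] at he
      exact ⟨r, hr, he⟩
    · have h1 := hWodd (-(2*n))
      rw [neg_neg] at h1
      have hk : ((((-(2*n)).toNat) : ℕ) : ℤ) = -(2*n) := Int.toNat_of_nonneg (by omega)
      have hev : Even ((-(2*n)).toNat) := by
        rw [← Int.even_coe_nat, hk]
        exact ⟨-n, by ring⟩
      obtain ⟨r, hr, he⟩ := (hm ((-(2*n)).toNat)).2 hev
      rw [hk] at he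
      refine ⟨-r, EDSaux.SR.neg_mem hr, ?_⟩
      rw [h1, he]; ring
end

section
/- For any Somos 5 sequence τ over a field K with coefficients α, β, the quantity J(n) = τ(n+1)·τ(n−2)/(τ(n)·τ(n−1)) + τ(n+2)·τ(n−1)/(τ(n+1)·τ(n)) + α·(τ(n)·τ(n−1)/(τ(n+1)·τ(n−2)) + τ(n+1)·τ(n)/(τ(n+2)·τ(n−1))) + β·τ(n)^2/(τ(n+2)·τ(n−2)) is independent of n, i.e. J(m) = J(n) for all m, n ∈ ℤ. -/
/-! Writing `J` in terms of the five consecutive terms `a, b, c, d, e` it involves, the shifted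
invariant (in `b, …, f`) differs from the original by a multiple of the Somos 5 relation
`f a = α e b + β d c`, so `J` is `1`-periodic on `ℤ`, hence constant. -/

section

variable {K : Type*} [Field K]

/-- `J(n)` for `(a, b, c, d, e) = (τ (n - 2), …, τ (n + 2))`. -/
def somos5Invariant (α β a b c d e : K) : K :=
  d * a / (c * b) + e * b / (d * c) + α * (c * b / (d * a) + d * c / (e * b))
    + β * c ^ 2 / (e * a)

theorem somos5Invariant_shift (α β : K) {a b c d e f : K} (ha : a ≠ 0) (hb : b ≠ 0)
    (hc : c ≠ 0) (hd : d ≠ 0) (he : e ≠ 0) (hf : f ≠ 0)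
    (h : f * a = α * (e * b) + β * (d * c)) :
    somos5Invariant α β b c d e f = somos5Invariant α β a b c d e := by
  unfold somos5Invariant
  field_simp
  linear_combination (b * c ^ 2 * f - a * d ^ 2 * e) * h

theorem somos5Invariant_periodic (α β : K) {τ : ℤ → K} (hτ : ∀ n, τ n ≠ 0)
    (hrec : ∀ n : ℤ,
      τ (n + 5) * τ n = α * (τ (n + 4) * τ (n + 1)) + β * (τ (n + 3) * τ (n + 2))) :
    Function.Periodic
      (fun n ↦ somos5Invariant α β (τ (n - 2)) (τ (n - 1)) (τ n) (τ (n + 1)) (τ (n + 2))) 1 := by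
  intro n
  have h := hrec (n - 2)
  simp only [show n - 2 + 5 = n + 3 by ring, show n - 2 + 4 = n + 2 by ring,
    show n - 2 + 3 = n + 1 by ring, show n - 2 + 2 = n by ring,
    show n - 2 + 1 = n - 1 by ring] at h
  simp only [show n + 1 - 2 = n - 1 by ring, show n + 1 - 1 = n by ring,
    show n + 1 + 1 = n + 2 by ring, show n + 1 + 2 = n + 3 by ring]
  exact somos5Invariant_shift α β (hτ _) (hτ _) (hτ _) (hτ _) (hτ _) (hτ _) h

end

/-- The invariant `J` of a Somos 5 sequence is independent of `n`. -/
theorem somos5_translation_invariant {K : Type*} [Field K] (α β : K) (τ : ℤ → K)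
    (hτ : ∀ n : ℤ, τ n ≠ 0)
    (hrec : ∀ n : ℤ,
      τ (n + 5) * τ n = α * (τ (n + 4) * τ (n + 1)) + β * (τ (n + 3) * τ (n + 2))) :
    ∀ m n : ℤ,
      (τ (m + 1) * τ (m - 2) / (τ m * τ (m - 1))
        + τ (m + 2) * τ (m - 1) / (τ (m + 1) * τ m)
        + α * (τ m * τ (m - 1) / (τ (m + 1) * τ (m - 2))
            + τ (m + 1) * τ m / (τ (m + 2) * τ (m - 1)))
        + β * (τ m) ^ 2 / (τ (m + 2) * τ (m - 2)))
      = (τ (n + 1) * τ (n - 2) / (τ n * τ (n - 1))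
        + τ (n + 2) * τ (n - 1) / (τ (n + 1) * τ n)
        + α * (τ n * τ (n - 1) / (τ (n + 1) * τ (n - 2))
            + τ (n + 1) * τ n / (τ (n + 2) * τ (n - 1)))
        + β * (τ n) ^ 2 / (τ (n + 2) * τ (n - 2))) := by
  intro m n
  have hJ := somos5Invariant_periodic α β hτ hrec
  have hm := hJ.int_mul_eq m
  have hn := hJ.int_mul_eq n
  simp only [mul_one] at hm hn
  exact hm.trans hn.symm
end
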